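/- Let G be a connected graph of order n ≥ 3 and let k = Γ_t(G). Then D_k^t(G) is connected if and only if the set of stems of G is a total dominating set of G. -/
import Mathlib


open Finset

variable {V : Type*} [Fintype V] [DecidableEq V]

def IsTDS (G : SimpleGraph V) (S : Finset V) : Prop :=
  ∀ v : V, ∃ s ∈ S, G.Adj v s

def IsMTDS (G : SimpleGraph V) (S : Finset V) : Prop :=
  IsTDS G S ∧ ∀ T : Finset V, T ⊂ S → ¬ IsTDS G T

/-- The `k`-total dominating graph: vertices are total dominating sets of size at most `k`,
adjacent iff they differ by adding or deleting one vertex. -/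
def TDGraph (G : SimpleGraph V) (k : ℕ) :
    SimpleGraph {S : Finset V // IsTDS G S ∧ S.card ≤ k} :=
  SimpleGraph.fromRel (fun A B => A.1 ⊆ B.1 ∧ B.1.card = A.1.card + 1)

/-- The upper total domination number. -/
noncomputable def GammaT (G : SimpleGraph V) : ℕ :=
  sSup {k | ∃ S : Finset V, IsMTDS G S ∧ S.card = k}

/-- A leaf is a vertex of degree 1. -/
def IsLeaf (G : SimpleGraph V) (v : V) : Prop := (G.neighborSet v).ncard = 1

/-- A stem is a vertex adjacent to a leaf. -/
def IsStem (G : SimpleGraph V) (v : V) : Prop := ∃ u, IsLeaf G u ∧ G.Adj u v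

open Classical in
/-- The set of stems of `G`. -/
noncomputable def stems (G : SimpleGraph V) : Finset V :=
  Finset.univ.filter (fun v => IsStem G v)

lemma exists_adj (G : SimpleGraph V) (hG : G.Connected) (hn : 2 ≤ Fintype.card V) (v : V) :
    ∃ w, G.Adj v w := by
  have : Nontrivial V := Fintype.one_lt_card_iff_nontrivial.mp hn
  obtain ⟨u, hu⟩ := exists_ne v
  obtain ⟨p⟩ := hG.preconnected v u
  cases p with
  | nil => exact absurd rfl hu.symm
  | cons h _ => exact ⟨_, h⟩

lemma tds_univ (G : SimpleGraph V) (hG : G.Connected) (hn : 2 ≤ Fintype.card V) :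
    IsTDS G Finset.univ := by
  intro v
  obtain ⟨w, hw⟩ := exists_adj G hG hn v
  exact ⟨w, mem_univ w, hw⟩

lemma tds_mono (G : SimpleGraph V) {S T : Finset V} (h : IsTDS G S) (hST : S ⊆ T) :
    IsTDS G T := fun v => by obtain ⟨s, hs, ha⟩ := h v; exact ⟨s, hST hs, ha⟩

lemma stems_subset_tds (G : SimpleGraph V) {T : Finset V} (hT : IsTDS G T) :
    stems G ⊆ T := by
  classical
  intro s hs
  rw [stems, mem_filter] at hs
  obtain ⟨u, hleaf, hadj⟩ := hs.2
  obtain ⟨a, ha⟩ := Set.ncard_eq_one.mp hleaf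
  obtain ⟨t, ht, hadjt⟩ := hT u
  have hsa : s = a := by have : s ∈ G.neighborSet u := hadj; rwa [ha, Set.mem_singleton_iff] at this
  have hta : t = a := by have : t ∈ G.neighborSet u := hadjt; rwa [ha, Set.mem_singleton_iff] at this
  rwa [hsa, ← hta]

lemma exists_mtds_subset (G : SimpleGraph V) {T : Finset V} (hT : IsTDS G T) :
    ∃ S ⊆ T, IsMTDS G S := by
  classical
  have hne : (T.powerset.filter (fun S => IsTDS G S)).Nonempty :=
    ⟨T, by simp [hT]⟩
  obtain ⟨S, hS, hmin⟩ := Finset.exists_min_image _ Finset.card hne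
  rw [mem_filter, mem_powerset] at hS
  refine ⟨S, hS.1, hS.2, fun T' hT' hTDS' => ?_⟩
  have hmem : T' ∈ T.powerset.filter (fun S => IsTDS G S) := by
    rw [mem_filter, mem_powerset]; exact ⟨hT'.subset.trans hS.1, hTDS'⟩
  have := hmin T' hmem
  have := Finset.card_lt_card hT'
  omega

lemma mtds_card_le (G : SimpleGraph V) {S : Finset V} (hS : IsMTDS G S) :
    S.card ≤ GammaT G :=
  le_csSup ⟨Fintype.card V, fun n ⟨S', _, h⟩ => h ▸ (S'.card_le_univ.trans_eq (by simp))⟩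
    ⟨S, hS, rfl⟩

lemma exists_max_mtds (G : SimpleGraph V) (hG : G.Connected) (hn : 2 ≤ Fintype.card V) :
    ∃ D, IsMTDS G D ∧ D.card = GammaT G := by
  have hne : {k | ∃ S : Finset V, IsMTDS G S ∧ S.card = k}.Nonempty := by
    obtain ⟨S, _, hS⟩ := exists_mtds_subset G (tds_univ G hG hn)
    exact ⟨S.card, S, hS, rfl⟩
  have hbdd : BddAbove {k | ∃ S : Finset V, IsMTDS G S ∧ S.card = k} :=
    ⟨Fintype.card V, fun n ⟨S', _, h⟩ => h ▸ (S'.card_le_univ.trans_eq (by simp))⟩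
  exact Nat.sSup_mem hne hbdd

theorem stmt_7 (G : SimpleGraph V) (hG : G.Connected) (hn : 3 ≤ Fintype.card V)
    (k : ℕ) (hk : k = GammaT G) :
    (TDGraph G k).Connected ↔ IsTDS G (stems G) := by
  classical
  have hn2 : 2 ≤ Fintype.card V := by omega
  constructor
  · intro hconn
    obtain ⟨D, hD, hDcard⟩ := exists_max_mtds G hG hn2
    have hDk : D.card ≤ k := by omega
    set vD : {S : Finset V // IsTDS G S ∧ S.card ≤ k} := ⟨D, hD.1, hDk⟩ with hvD
    -- vD is isolated
    have hiso : ∀ X, ¬ (TDGraph G k).Adj vD X := by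
      intro X hadj
      rw [TDGraph, SimpleGraph.fromRel_adj] at hadj
      obtain ⟨hne, h | h⟩ := hadj
      · have := X.2.2
        have hx : X.1.card = D.card + 1 := h.2
        omega
      · have hss : X.1 ⊂ D := by
          have hne' : X.1 ≠ D := by
            intro heq
            have h2 := h.2
            rw [heq] at h2
            omega
          exact Finset.ssubset_iff_subset_ne.mpr ⟨h.1, hne'⟩
        exact hD.2 X.1 hss X.2.1
    -- every vertex equals vD
    have hall : ∀ B : {S : Finset V // IsTDS G S ∧ S.card ≤ k}, B = vD := by
      intro B
      obtain ⟨p⟩ := hconn.preconnected vD B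
      cases p with
      | nil => rfl
      | cons h _ => exact absurd h (hiso _)
    -- D ⊆ stems
    have hDstems : D ⊆ stems G := by
      intro d hd
      by_contra hns
      have hnstem : ¬ IsStem G d := by
        intro h
        exact hns (by rw [stems, mem_filter]; exact ⟨mem_univ d, h⟩)
      have hTtds : IsTDS G (Finset.univ.erase d) := by
        intro v
        by_cases hcase : ∃ w, w ≠ d ∧ G.Adj v w
        · obtain ⟨w, hw, hadj⟩ := hcase
          exact ⟨w, Finset.mem_erase.mpr ⟨hw, mem_univ w⟩, hadj⟩
        · exfalso
          push_neg at hcase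
          obtain ⟨w0, h0⟩ := exists_adj G hG hn2 v
          have hw0 : w0 = d := by by_contra h; exact (hcase w0 h) h0
          have hNv : G.neighborSet v = {d} := by
            ext x
            simp only [SimpleGraph.mem_neighborSet, Set.mem_singleton_iff]
            constructor
            · intro hx; by_contra h; exact (hcase x h) hx
            · intro hx; rwa [hx, ← hw0]
          exact hnstem ⟨v, by rw [IsLeaf, hNv]; simp, hw0 ▸ h0⟩
      obtain ⟨S, hSsub, hSmtds⟩ := exists_mtds_subset G hTtds
      have hSk : S.card ≤ k := by have := mtds_card_le G hSmtds; omega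
      have : (⟨S, hSmtds.1, hSk⟩ : {S : Finset V // IsTDS G S ∧ S.card ≤ k}) = vD :=
        hall _
      have hSD : S = D := congrArg Subtype.val this
      have : d ∈ Finset.univ.erase d := hSsub (hSD ▸ hd)
      simp at this
    exact tds_mono G hD.1 hDstems
  · intro hstems
    have hstems_mtds : IsMTDS G (stems G) := by
      refine ⟨hstems, fun T hT hTDS => ?_⟩
      exact hT.ne (Finset.Subset.antisymm hT.subset (stems_subset_tds G hTDS))
    have hgamma : GammaT G = (stems G).card := by
      have hset : {k | ∃ S : Finset V, IsMTDS G S ∧ S.card = k} = {(stems G).card} := by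
        ext n
        simp only [Set.mem_setOf_eq, Set.mem_singleton_iff]
        constructor
        · rintro ⟨S, hS, rfl⟩
          have hsub : stems G ⊆ S := stems_subset_tds G hS.1
          have : stems G = S := by
            by_contra h
            exact hS.2 (stems G) (Finset.ssubset_iff_subset_ne.mpr ⟨hsub, h⟩) hstems
          rw [← this]
        · rintro rfl
          exact ⟨stems G, hstems_mtds, rfl⟩
      rw [GammaT, hset, csSup_singleton]
    have hcardk : (stems G).card ≤ k := by omega
    have hnonempty : Nonempty {S : Finset V // IsTDS G S ∧ S.card ≤ k} :=
      ⟨⟨stems G, hstems, hcardk⟩⟩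
    refine ⟨?_⟩
    intro A B
    have hA : A.1 = stems G :=
        (Finset.eq_of_subset_of_card_le (stems_subset_tds G A.2.1) (by omega)).symm
    have hB : B.1 = stems G :=
      (Finset.eq_of_subset_of_card_le (stems_subset_tds G B.2.1) (by omega)).symm
    have hAB : A = B := Subtype.ext (hA.trans hB.symm)
    rw [hAB]
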